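/- arXiv:1012.0170 — 3 statements merged into one kernel-verified Lean document; each statement's English description precedes it below -/
import Mathlib

section
/- Let c : ℕ → ℂ and let w ∈ ℂ satisfy |w| > 1 and limsup_{k→∞} |c_k|^{1/k} > 1/|w|. Then the sequence of terms k ↦ c_k · T_k(Zh(w)) does not tend to 0 as k → ∞; in particular the series Σ_{k=0}^∞ c_k · T_k(Zh(w)) is not summable. -/
/-!
Since `Zh w = cosh (log w)`, the identity `T_k (cosh θ) = cosh (k θ)` gives
`T_k (Zh w) = (w ^ k + w⁻¹ ^ k) / 2`, so `|T_k (Zh w)|` grows like `|w| ^ k / 2`.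
Pick `t` with `1 / |w| < t < min 1 (limsup |c_k| ^ (1/k))`. Then `|c_k| ≥ t ^ k` for infinitely
many `k`, and for those `|c_k T_k (Zh w)| ≥ ((t |w|) ^ k - (t / |w|) ^ k) / 2 ≥ (t |w| - 1) / 2 > 0`.
-/

open Filter

/-- The Joukowski map `Zh w = (w + w⁻¹) / 2`. -/
noncomputable def Zh (w : ℂ) : ℂ := (w + w⁻¹) / 2

theorem pow_le_of_lt_rpow_one_div {x t : ℝ} (hx : 0 ≤ x) (ht : 0 ≤ t) {k : ℕ} (hk : k ≠ 0)
    (h : t < x ^ ((1 : ℝ) / k)) : t ^ k ≤ x := by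
  rw [one_div, Real.lt_rpow_inv_iff_of_pos ht hx (by positivity), Real.rpow_natCast] at h
  exact h.le

theorem not_tendsto_zero_of_frequently_le_norm {α E : Type*} [SeminormedAddCommGroup E]
    {l : Filter α} {f : α → E} {δ : ℝ} (hδ : 0 < δ) (h : ∃ᶠ k in l, δ ≤ ‖f k‖) :
    ¬ Tendsto f l (nhds 0) := fun hf =>
  h (((tendsto_zero_iff_norm_tendsto_zero.mp hf).eventually_lt_const hδ).mono
    fun _ hk => not_le.mpr hk)

theorem Zh_eq_cosh_log {w : ℂ} (hw : w ≠ 0) : Zh w = Complex.cosh (Complex.log w) := by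
  rw [Zh, Complex.cosh, Complex.exp_neg, Complex.exp_log hw]

namespace Polynomial.Chebyshev

theorem T_eval_Zh {w : ℂ} (hw : w ≠ 0) (n : ℕ) :
    (T ℂ n).eval (Zh w) = (w ^ n + w⁻¹ ^ n) / 2 := by
  rw [Zh_eq_cosh_log hw, T_complex_cosh, Complex.cosh, Int.cast_natCast, ← mul_neg,
    Complex.exp_nat_mul, Complex.exp_nat_mul, Complex.exp_neg, Complex.exp_log hw]

theorem norm_T_eval_Zh_ge {w : ℂ} (hw : w ≠ 0) (n : ℕ) :
    (‖w‖ ^ n - ‖w‖⁻¹ ^ n) / 2 ≤ ‖(T ℂ n).eval (Zh w)‖ := by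
  rw [T_eval_Zh hw, norm_div, Complex.norm_two, ← norm_inv, ← norm_pow, ← norm_pow]
  gcongr
  exact norm_sub_le_norm_add _ _

theorem norm_mul_T_eval_Zh_ge {z w : ℂ} {t : ℝ} {k : ℕ} (ht : t ≤ 1) (htw : 1 ≤ t * ‖w‖)
    (hk : k ≠ 0) (hz : t ^ k ≤ ‖z‖) : (t * ‖w‖ - 1) / 2 ≤ ‖z * (T ℂ k).eval (Zh w)‖ := by
  have ht0 : 0 ≤ t := by
    by_contra! h
    nlinarith [norm_nonneg w]
  have hw : 1 ≤ ‖w‖ := htw.trans (mul_le_of_le_one_left (norm_nonneg w) ht)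
  have hw0 : w ≠ 0 := norm_pos_iff.mp (by linarith)
  have hlarge : t * ‖w‖ ≤ (t * ‖w‖) ^ k := le_self_pow₀ htw hk
  have hsmall : (t * ‖w‖⁻¹) ^ k ≤ 1 :=
    pow_le_one₀ (by positivity) (mul_le_one₀ ht (by positivity) (inv_le_one_of_one_le₀ hw))
  have hw_pow : ‖w‖⁻¹ ^ k ≤ ‖w‖ ^ k :=
    (pow_le_one₀ (by positivity) (inv_le_one_of_one_le₀ hw)).trans (one_le_pow₀ hw)
  calc (t * ‖w‖ - 1) / 2 ≤ ((t * ‖w‖) ^ k - (t * ‖w‖⁻¹) ^ k) / 2 := by linarith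
    _ = t ^ k * ((‖w‖ ^ k - ‖w‖⁻¹ ^ k) / 2) := by ring
    _ ≤ ‖z‖ * ‖(T ℂ k).eval (Zh w)‖ :=
      mul_le_mul hz (norm_T_eval_Zh_ge hw0 k) (by linarith) (norm_nonneg _)
    _ = ‖z * (T ℂ k).eval (Zh w)‖ := (norm_mul _ _).symm

end Polynomial.Chebyshev

/-- If `|w| > 1` and `limsup |c_k|^(1/k) > 1/|w|`, then the terms `c_k · T_k(Zh w)` do not
tend to `0`; in particular the Chebyshev series diverges at `Zh w`. -/
theorem chebyshev_series_diverges_outside (c : ℕ → ℂ) (w : ℂ) (hw : 1 < ‖w‖)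
    (hc : 1 / ‖w‖ <
      Filter.limsup (fun k : ℕ => (‖c k‖) ^ ((1 : ℝ) / k)) atTop) :
    ¬ Tendsto (fun k : ℕ => c k * (Polynomial.Chebyshev.T ℂ k).eval (Zh w)) atTop (nhds 0) ∧
    ¬ Summable (fun k : ℕ => c k * (Polynomial.Chebyshev.T ℂ k).eval (Zh w)) := by
  have hw0 : 0 < ‖w‖ := one_pos.trans hw
  obtain ⟨t, hwt, ht⟩ := exists_between (lt_min hc ((div_lt_one hw0).mpr hw))
  have htw : 1 < t * ‖w‖ := by rwa [div_lt_iff₀ hw0] at hwt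
  have ht0 : 0 < t := (one_div_pos.mpr hw0).trans hwt
  have hfreq : ∃ᶠ k in atTop, t < ‖c k‖ ^ ((1 : ℝ) / k) :=
    frequently_lt_of_lt_limsup (isCoboundedUnder_le_of_le atTop fun k => by positivity)
      (ht.trans_le (min_le_left _ _))
  have hlow : ∃ᶠ k in atTop,
      (t * ‖w‖ - 1) / 2 ≤ ‖c k * (Polynomial.Chebyshev.T ℂ k).eval (Zh w)‖ :=
    (hfreq.and_eventually (eventually_ne_atTop 0)).mono fun k ⟨hk, hk0⟩ =>
      Polynomial.Chebyshev.norm_mul_T_eval_Zh_ge (ht.le.trans (min_le_right _ _)) htw.le hk0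
        (pow_le_of_lt_rpow_one_div (norm_nonneg _) ht0.le hk0 hk)
  have hnot := not_tendsto_zero_of_frequently_le_norm (by linarith) hlow
  exact ⟨hnot, fun h => hnot h.tendsto_atTop_zero⟩
end

section
/- Let ρ > 1 and let f : ℂ → ℂ be holomorphic on an open set containing the closed canonical elliptical region Zh '' {w ∈ ℂ : 1 ≤ |w| ≤ ρ}. Then the Chebyshev coefficients of f satisfy limsup_{k→∞} |c_k(f)|^{1/k} ≤ 1/ρ. -/
open Filter intervalIntegral

/-- The `k`-th Fourier–Chebyshev coefficient of `f` with respect to the Chebyshev weight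
`(1 − x²)^(-1/2)` on `[-1, 1]`. -/
noncomputable def chebCoeff (f : ℂ → ℂ) (k : ℕ) : ℂ :=
  if k = 0 then
    (1 / Real.pi : ℂ) * ∫ x in (-1 : ℝ)..1, f x * (((1 - x ^ 2) ^ (-(1 : ℝ) / 2) : ℝ) : ℂ)
  else
    (2 / Real.pi : ℂ) * ∫ x in (-1 : ℝ)..1,
      f x * (Polynomial.Chebyshev.T ℂ k).eval (x : ℂ) * (((1 - x ^ 2) ^ (-(1 : ℝ) / 2) : ℝ) : ℂ)

/-!
Substituting `x = cos θ` turns `c_k(f)` into `(2/π) ∫₀^π f(cos θ) cos(kθ) dθ`; since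
`Zh (e^{iθ}) = cos θ` and `θ ↦ f(cos θ)` is even, this is `(1/(πi)) ∮_{|z|=1} f(Zh z) z^{-k-1} dz`.
The integrand is holomorphic on the closed annulus `1 ≤ |z| ≤ ρ`, so the circle can be pushed out
to `|z| = ρ`, where the standard estimate gives `|c_k(f)| ≤ 2M ρ^{-k}` with
`M = max_{|z|=ρ} |f(Zh z)|`. Taking `k`-th roots, `(2M)^{1/k} → 1`.
-/

open Complex MeasureTheory Set Topology

theorem Zh_exp_mul_I (θ : ℂ) : Zh (exp (θ * I)) = cos θ := by
  rw [Zh, ← exp_neg, cos]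
  ring_nf

theorem differentiableAt_Zh {w : ℂ} (hw : w ≠ 0) : DifferentiableAt ℂ Zh w :=
  ((differentiableAt_id.add (differentiableAt_inv hw)).div_const 2 :)

theorem Zh_exp_arccos_mul_I {x : ℝ} (h₁ : -1 ≤ x) (h₂ : x ≤ 1) :
    Zh (exp (Real.arccos x * I)) = x := by
  rw [Zh_exp_mul_I, ← ofReal_cos, Real.cos_arccos h₁ h₂]

theorem integral_inv_sqrt_one_sub_sq_smul_eq_integral_cos {E : Type*} [NormedAddCommGroup E]
    [NormedSpace ℝ E] (g : ℝ → E) :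
    ∫ x in (-1 : ℝ)..1, (√(1 - x ^ 2))⁻¹ • g x = ∫ θ in 0..Real.pi, g (Real.cos θ) := calc
  _ = ∫ x in (1 : ℝ)..(-1), (-(√(1 - x ^ 2))⁻¹) • ((g ∘ Real.cos) ∘ Real.arccos) x := by
    rw [intervalIntegral.integral_symm, ← intervalIntegral.integral_neg]
    refine intervalIntegral.integral_congr fun x hx => ?_
    rw [uIcc_of_ge (by norm_num)] at hx
    simp [Real.cos_arccos hx.1 hx.2]
  _ = ∫ θ in (Real.arccos 1)..(Real.arccos (-1)), g (Real.cos θ) :=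
    intervalIntegral.integral_deriv_smul_comp_of_deriv_nonpos
      Real.continuous_arccos.continuousOn
      (fun x _ => by simpa using Real.hasDerivAt_arccos (x := x) (by aesop) (by aesop))
      (fun x _ => by simp)
  _ = _ := by simp

theorem chebCoeff_eq_integral_cos (f : ℂ → ℂ) {k : ℕ} (hk : k ≠ 0) :
    chebCoeff f k = 2 / Real.pi * ∫ θ in 0..Real.pi, f (cos θ) * cos (k * θ) := calc
  _ = 2 / Real.pi * ∫ x in (-1 : ℝ)..1,
      (√(1 - x ^ 2))⁻¹ • (f x * (Polynomial.Chebyshev.T ℂ k).eval (x : ℂ)) := by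
    rw [chebCoeff, if_neg hk]
    congr 1
    refine intervalIntegral.integral_congr fun x hx => ?_
    rw [uIcc_of_le (by norm_num)] at hx
    have h₀ : 0 ≤ 1 - x ^ 2 := by nlinarith [hx.1, hx.2]
    rw [neg_div, Real.rpow_neg h₀, ← Real.sqrt_eq_rpow, real_smul, mul_comm]
  _ = _ := by
    simp only [integral_inv_sqrt_one_sub_sq_smul_eq_integral_cos, ofReal_cos,
      Polynomial.Chebyshev.T_complex_cos, Int.cast_natCast]

theorem integral_mul_exp_eq_two_mul_integral_mul_cos {F : ℝ → ℂ}
    (hF : Continuous F) (hsymm : ∀ θ, F (2 * Real.pi - θ) = F θ) (k : ℤ) :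
    ∫ θ in 0..2 * Real.pi, F θ * exp (-k * θ * I)
      = 2 * ∫ θ in 0..Real.pi, F θ * cos (k * θ) := by
  have hint : ∀ s : ℂ, ∀ a b : ℝ,
      IntervalIntegrable (fun θ : ℝ => F θ * exp (s * θ * I)) volume a b :=
    fun s a b => Continuous.intervalIntegrable (by fun_prop) a b
  have hreflect : ∫ θ in Real.pi..2 * Real.pi, F θ * exp (-k * θ * I)
      = ∫ θ in 0..Real.pi, F θ * exp (k * θ * I) := by
    have := intervalIntegral.integral_comp_sub_left (a := 0) (b := Real.pi)
      (fun θ => F θ * exp (-k * θ * I)) (2 * Real.pi)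
    rw [sub_zero, show 2 * Real.pi - Real.pi = Real.pi by ring] at this
    rw [← this]
    refine intervalIntegral.integral_congr fun θ _ => ?_
    have : -k * ((2 * Real.pi - θ : ℝ) : ℂ) * I = (-k : ℤ) * (2 * Real.pi * I) + k * θ * I := by
      push_cast; ring
    simp only [hsymm, this, exp_add, exp_int_mul_two_pi_mul_I, one_mul]
  rw [← intervalIntegral.integral_add_adjacent_intervals (hint _ _ _) (hint _ _ _), hreflect,
    ← intervalIntegral.integral_add (hint _ _ _) (hint _ _ _),
    ← intervalIntegral.integral_const_mul]
  refine intervalIntegral.integral_congr fun θ _ => ?_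
  rw [mul_left_comm, two_cos]
  ring_nf

theorem circleIntegral_comp_Zh_mul_zpow (f : ℂ → ℂ) (k : ℤ) :
    ∮ z in C(0, 1), f (Zh z) * z ^ (-k - 1)
      = I * ∫ θ in 0..2 * Real.pi, f (cos θ) * exp (-k * θ * I) := by
  rw [circleIntegral, ← intervalIntegral.integral_const_mul]
  refine intervalIntegral.integral_congr fun θ _ => ?_
  have hexp : exp (θ * I) * exp (((-k - 1 : ℤ) : ℂ) * (θ * I)) = exp (-k * θ * I) := by
    rw [← exp_add]; push_cast; ring_nf
  simp only [deriv_circleMap, circleMap_zero, ofReal_one, one_mul, Zh_exp_mul_I, smul_eq_mul,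
    ← exp_int_mul]
  linear_combination I * f (cos θ) * hexp

theorem chebCoeff_eq_circleIntegral {f : ℂ → ℂ} (hf : ContinuousOn f (ofReal '' Icc (-1) 1))
    {k : ℕ} (hk : k ≠ 0) :
    chebCoeff f k = (∮ z in C(0, 1), f (Zh z) * z ^ (-(k : ℤ) - 1)) / (Real.pi * I) := by
  have hF : Continuous fun θ : ℝ => f (cos θ) :=
    hf.comp_continuous (by fun_prop) fun θ =>
      ⟨Real.cos θ, ⟨Real.neg_one_le_cos θ, Real.cos_le_one θ⟩, ofReal_cos θ⟩
  have hsymm : ∀ θ : ℝ, f (cos ↑(2 * Real.pi - θ)) = f (cos θ) := fun θ => by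
    push_cast
    rw [cos_two_pi_sub]
  rw [circleIntegral_comp_Zh_mul_zpow, integral_mul_exp_eq_two_mul_integral_mul_cos hF hsymm,
    chebCoeff_eq_integral_cos f hk]
  have hπ : (Real.pi : ℂ) ≠ 0 := ofReal_ne_zero.mpr Real.pi_ne_zero
  field_simp
  push_cast
  ring

theorem norm_chebCoeff_le {f : ℂ → ℂ} {ρ M : ℝ} (hρ : 1 ≤ ρ)
    (hf : ∀ w : ℂ, 1 ≤ ‖w‖ → ‖w‖ ≤ ρ → DifferentiableAt ℂ f (Zh w))
    (hM : ∀ w ∈ Metric.sphere (0 : ℂ) ρ, ‖f (Zh w)‖ ≤ M) {k : ℕ} (hk : k ≠ 0) :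
    ‖chebCoeff f k‖ ≤ 2 * M / ρ ^ k := by
  set g : ℂ → ℂ := fun z => f (Zh z) * z ^ (-(k : ℤ) - 1)
  have hρ₀ : 0 < ρ := by linarith
  have hg : ∀ z : ℂ, 1 ≤ ‖z‖ → ‖z‖ ≤ ρ → DifferentiableAt ℂ g z := fun z h₁ h₂ => by
    have hz : z ≠ 0 := norm_pos_iff.mp (by linarith)
    exact ((hf z h₁ h₂).comp z (differentiableAt_Zh hz)).mul
      (differentiableAt_zpow.mpr (Or.inl hz))
  have hsegment : ContinuousOn f (ofReal '' Icc (-1) 1) := by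
    rintro _ ⟨x, ⟨h₁, h₂⟩, rfl⟩
    rw [← Zh_exp_arccos_mul_I h₁ h₂]
    exact (hf _ (by simp) (by simp [hρ])).continuousAt.continuousWithinAt
  have hcauchy : ∮ z in C(0, 1), g z = ∮ z in C(0, ρ), g z := by
    refine (circleIntegral_eq_of_differentiable_on_annulus_off_countable one_pos hρ
      countable_empty (fun z hz => ?_) fun z hz => ?_).symm
    · simp only [Set.mem_sdiff, mem_closedBall_zero_iff, mem_ball_zero_iff, not_lt] at hz
      exact (hg z hz.2 hz.1).continuousAt.continuousWithinAt
    · simp only [sdiff_empty, Set.mem_sdiff, mem_closedBall_zero_iff, mem_ball_zero_iff,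
        not_le] at hz
      exact hg z hz.2.le hz.1.le
  have hbound : ∀ z ∈ Metric.sphere (0 : ℂ) ρ, ‖g z‖ ≤ M * ρ ^ (-(k : ℤ) - 1) := by
    intro z hz
    rw [mem_sphere_zero_iff_norm] at hz
    simp only [g, norm_mul, norm_zpow, hz]
    gcongr
    exact hM z (mem_sphere_zero_iff_norm.mpr hz)
  rw [chebCoeff_eq_circleIntegral hsegment hk, hcauchy, norm_div, norm_mul, norm_I, norm_real,
    Real.norm_of_nonneg Real.pi_pos.le, mul_one, div_le_iff₀ Real.pi_pos]
  calc ‖∮ z in C(0, ρ), g z‖ ≤ 2 * Real.pi * ρ * (M * ρ ^ (-(k : ℤ) - 1)) :=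
        circleIntegral.norm_integral_le_of_norm_le_const hρ₀.le hbound
    _ = 2 * M / ρ ^ k * Real.pi := by
        rw [zpow_sub_one₀ hρ₀.ne', zpow_neg, zpow_natCast]
        field_simp

theorem limsup_rpow_one_div_le_of_le_mul_pow {a : ℕ → ℝ} {C q : ℝ} (ha : ∀ k, 0 ≤ a k)
    (hq : 0 ≤ q) (h : ∀ k ≠ 0, a k ≤ C * q ^ k) :
    Filter.limsup (fun k : ℕ => a k ^ ((1 : ℝ) / k)) atTop ≤ q := by
  set C' := max C 1
  have hroot : ∀ k ≠ 0, a k ^ ((1 : ℝ) / k) ≤ C' ^ ((1 : ℝ) / k) * q := fun k hk => calc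
    a k ^ ((1 : ℝ) / k) ≤ (C' * q ^ k) ^ ((1 : ℝ) / k) := by
      gcongr
      · exact ha k
      · exact (h k hk).trans (by gcongr; exact le_max_left _ _)
    _ = C' ^ ((1 : ℝ) / k) * q := by
      rw [Real.mul_rpow (by positivity) (by positivity), one_div,
        Real.pow_rpow_inv_natCast hq hk]
  have htend : Tendsto (fun k : ℕ => C' ^ ((1 : ℝ) / k) * q) atTop (𝓝 q) := by
    have := ((Real.continuousAt_const_rpow (by positivity : C' ≠ 0)).tendsto.comp
      tendsto_one_div_atTop_nhds_zero_nat).mul_const q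
    simpa using this
  calc Filter.limsup (fun k : ℕ => a k ^ ((1 : ℝ) / k)) atTop
      ≤ Filter.limsup (fun k : ℕ => C' ^ ((1 : ℝ) / k) * q) atTop :=
        limsup_le_limsup (eventually_atTop.mpr ⟨1, fun k hk => hroot k (by omega)⟩)
          (isCoboundedUnder_le_of_le atTop fun k => Real.rpow_nonneg (ha k) _)
          htend.isBoundedUnder_le
    _ = q := htend.limsup_eq

/-- If `f` is holomorphic on an open set containing the closed canonical elliptical region
`Zh '' {w : 1 ≤ |w| ≤ ρ}`, then its Chebyshev coefficients satisfy
`limsup |c_k(f)|^(1/k) ≤ 1/ρ`. -/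
theorem chebCoeff_limsup_le (ρ : ℝ) (hρ : 1 < ρ) (f : ℂ → ℂ)
    (hf : ∃ U : Set ℂ, IsOpen U ∧
      Zh '' {w : ℂ | 1 ≤ ‖w‖ ∧ ‖w‖ ≤ ρ} ⊆ U ∧ DifferentiableOn ℂ f U) :
    Filter.limsup (fun k : ℕ => ‖chebCoeff f k‖ ^ ((1 : ℝ) / k)) atTop
      ≤ 1 / ρ := by
  obtain ⟨U, hU, hsub, hfU⟩ := hf
  have hdiff : ∀ w : ℂ, 1 ≤ ‖w‖ → ‖w‖ ≤ ρ → DifferentiableAt ℂ f (Zh w) := fun w h₁ h₂ =>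
    hfU.differentiableAt (hU.mem_nhds (hsub ⟨w, ⟨h₁, h₂⟩, rfl⟩))
  have hcont : ContinuousOn (fun w => f (Zh w)) (Metric.sphere 0 ρ) := fun w hw => by
    rw [mem_sphere_zero_iff_norm] at hw
    have hw₀ : w ≠ 0 := norm_pos_iff.mp (by linarith)
    exact ((hdiff w (by linarith) hw.le).comp w (differentiableAt_Zh hw₀)).continuousAt
      |>.continuousWithinAt
  obtain ⟨M, hM⟩ := (isCompact_sphere (0 : ℂ) ρ).exists_bound_of_continuousOn hcont
  refine limsup_rpow_one_div_le_of_le_mul_pow (C := 2 * M) (fun k => norm_nonneg _)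
    (by positivity) fun k hk => ?_
  rw [one_div_pow, ← div_eq_mul_one_div]
  exact norm_chebCoeff_le hρ.le hdiff hM hk
end

section
/- Let ρ > 1, let n ≥ 1 be a natural number, and let v ∈ ℂ satisfy 1/ρ < |v| < ρ. Then the circle integral over the circle of radius ρ centered at 0 of the function w ↦ wⁿ · (1 − w⁻²)/2 · (Zh(w) − Zh(v))⁻¹ equals 2·π·i · 2·T_n(Zh(v)), where Zh(w) = (w + w⁻¹)/2 and T_n is the n-th Chebyshev polynomial of the first kind. -/
open Complex Metric
open scoped Real

theorem Zh_exp (θ : ℂ) : Zh (exp θ) = cosh θ := by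
  rw [Zh, cosh, exp_neg]

theorem Polynomial.Chebyshev.T_eval_Zh_s13 {z : ℂ} (hz : z ≠ 0) (n : ℤ) :
    (T ℂ n).eval (Zh z) = (z ^ n + z⁻¹ ^ n) / 2 := by
  rw [← exp_log hz, Zh_exp, T_complex_cosh, cosh, ← exp_neg, ← exp_int_mul, ← exp_int_mul,
    mul_neg]

theorem Zh_sub_Zh {w v : ℂ} (hw : w ≠ 0) (hv : v ≠ 0) :
    Zh w - Zh v = (w - v) * (w - v⁻¹) / (2 * w) := by
  simp only [Zh]
  field_simp
  ring

section CauchyFormula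

variable {E : Type*} [NormedAddCommGroup E] [NormedSpace ℂ E] {R : ℝ} {c a b : ℂ} {f : ℂ → E}

theorem DiffContOnCl.circleIntegrable_sub_inv_smul (hf : DiffContOnCl ℂ f (ball c R))
    (ha : a ∈ ball c R) : CircleIntegrable (fun z => (z - a)⁻¹ • f z) c R := by
  have hR : 0 < R := pos_of_mem_ball ha
  refine ContinuousOn.circleIntegrable hR.le (ContinuousOn.smul ?_ ?_)
  · exact (continuousOn_id.sub continuousOn_const).inv₀ fun z hz =>
      sub_ne_zero.mpr (sphere_disjoint_ball.ne_of_mem hz ha)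
  · exact hf.continuousOn.mono (closure_ball c hR.ne' ▸ sphere_subset_closedBall)

theorem DiffContOnCl.circleIntegral_mul_sub_inv_smul [CompleteSpace E]
    (hf : DiffContOnCl ℂ f (ball c R)) (ha : a ∈ ball c R) (hb : b ∈ ball c R) (hab : a ≠ b) :
    (∮ z in C(c, R), ((z - a) * (z - b))⁻¹ • f z) = (2 * π * I / (a - b)) • (f a - f b) := by
  have hR : 0 < R := pos_of_mem_ball ha
  have partial_fractions : Set.EqOn (fun z => ((z - a) * (z - b))⁻¹ • f z)
      (fun z => (a - b)⁻¹ • ((z - a)⁻¹ • f z - (z - b)⁻¹ • f z)) (sphere c R) := by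
    intro z hz
    have hza : z - a ≠ 0 := sub_ne_zero.mpr (sphere_disjoint_ball.ne_of_mem hz ha)
    have hzb : z - b ≠ 0 := sub_ne_zero.mpr (sphere_disjoint_ball.ne_of_mem hz hb)
    simp only [smul_smul, ← sub_smul]
    congr 1
    field_simp [sub_ne_zero.mpr hab]
    ring
  rw [circleIntegral.integral_congr hR.le partial_fractions, circleIntegral.integral_smul,
    circleIntegral.integral_sub (hf.circleIntegrable_sub_inv_smul ha)
      (hf.circleIntegrable_sub_inv_smul hb), hf.circleIntegral_sub_inv_smul ha,
    hf.circleIntegral_sub_inv_smul hb, ← smul_sub, smul_smul, div_eq_inv_mul]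

end CauchyFormula

section FaberIntegrand

variable {R : ℝ} {c v : ℂ}

theorem faber_integrand_eq {w : ℂ} (hw : w ≠ 0) (hv : v ≠ 0) (m : ℕ) :
    w ^ (m + 1) * ((1 - (w ^ 2)⁻¹) / 2) * (Zh w - Zh v)⁻¹ =
      ((w - v) * (w - v⁻¹))⁻¹ * (w ^ (m + 2) - w ^ m) := by
  rw [Zh_sub_Zh hw hv, inv_div]
  field_simp
  ring

theorem circleIntegral_faber_integrand_of_ne_inv (hv : v ∈ ball c R) (hv' : v⁻¹ ∈ ball c R)
    (hvv : v ≠ v⁻¹) (m : ℕ) :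
    (∮ w in C(c, R), ((w - v) * (w - v⁻¹))⁻¹ * (w ^ (m + 2) - w ^ m)) =
      2 * π * I * (v ^ (m + 1) + v⁻¹ ^ (m + 1)) := by
  have hv0 : v ≠ 0 := by rintro rfl; exact hvv inv_zero.symm
  have divided_difference : v ^ (m + 2) - v ^ m - (v⁻¹ ^ (m + 2) - v⁻¹ ^ m) =
      (v - v⁻¹) * (v ^ (m + 1) + v⁻¹ ^ (m + 1)) := by
    linear_combination (v ^ m - v⁻¹ ^ m) * mul_inv_cancel₀ hv0
  simp only [← smul_eq_mul (a := ((_ - v) * _)⁻¹)]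
  rw [(by fun_prop : Differentiable ℂ fun w : ℂ => w ^ (m + 2) - w ^ m).diffContOnCl
    |>.circleIntegral_mul_sub_inv_smul hv hv' hvv, divided_difference, smul_eq_mul, ← mul_assoc,
    div_mul_cancel₀ _ (sub_ne_zero.mpr hvv)]

theorem circleIntegral_faber_integrand_of_eq_inv (hv : v ∈ ball c R) (hv0 : v ≠ 0)
    (hvv : v = v⁻¹) (m : ℕ) :
    (∮ w in C(c, R), ((w - v) * (w - v⁻¹))⁻¹ * (w ^ (m + 2) - w ^ m)) =
      2 * π * I * (v ^ (m + 1) + v⁻¹ ^ (m + 1)) := by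
  have hsq : v * v = 1 := by nth_rw 2 [hvv]; exact mul_inv_cancel₀ hv0
  have simple_pole (w : ℂ) : ((w - v) * (w - v⁻¹))⁻¹ * (w ^ (m + 2) - w ^ m) =
      (w - v)⁻¹ • (w ^ m * (w + v)) := by
    rw [← hvv, smul_eq_mul]
    obtain rfl | hw := eq_or_ne w v
    · simp
    · field_simp [sub_ne_zero.mpr hw]
      linear_combination w ^ m * hsq
  simp only [simple_pole]
  rw [(by fun_prop : Differentiable ℂ fun w => w ^ m * (w + v)).diffContOnCl
    |>.circleIntegral_sub_inv_smul hv, ← hvv, smul_eq_mul]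
  ring

end FaberIntegrand

/-- The Faber-polynomial contour-integral representation for the segment `[-1, 1]`:
for `ρ > 1`, `n ≥ 1` and `1/ρ < |v| < ρ`,
`∮_{|w|=ρ} wⁿ · (1 − w⁻²)/2 · (Zh(w) − Zh(v))⁻¹ dw = 2πi · 2·T_n(Zh(v))`. -/
theorem faber_contour_integral (ρ : ℝ) (hρ : 1 < ρ) (n : ℕ) (hn : 1 ≤ n) (v : ℂ)
    (hv₁ : 1 / ρ < ‖v‖) (hv₂ : ‖v‖ < ρ) :
    (∮ w in C(0, ρ), w ^ n * ((1 - (w ^ 2)⁻¹) / 2) * (Zh w - Zh v)⁻¹) =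
      2 * Real.pi * Complex.I * (2 * (Polynomial.Chebyshev.T ℂ n).eval (Zh v)) := by
  obtain ⟨m, rfl⟩ := Nat.exists_eq_add_of_le' hn
  have hρ0 : 0 < ρ := one_pos.trans hρ
  have hv0 : v ≠ 0 := norm_pos_iff.mp ((one_div_pos.mpr hρ0).trans hv₁)
  have hv : v ∈ ball (0 : ℂ) ρ := mem_ball_zero_iff.mpr hv₂
  have hv' : v⁻¹ ∈ ball (0 : ℂ) ρ := by
    rw [mem_ball_zero_iff, norm_inv]
    exact inv_lt_of_inv_lt₀ hρ0 (one_div ρ ▸ hv₁)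
  have residues : (∮ w in C(0, ρ), ((w - v) * (w - v⁻¹))⁻¹ * (w ^ (m + 2) - w ^ m)) =
      2 * π * I * (v ^ (m + 1) + v⁻¹ ^ (m + 1)) := by
    by_cases hvv : v = v⁻¹
    · exact circleIntegral_faber_integrand_of_eq_inv hv hv0 hvv m
    · exact circleIntegral_faber_integrand_of_ne_inv hv hv' hvv m
  rw [circleIntegral.integral_congr hρ0.le fun w hw =>
      faber_integrand_eq (ne_of_mem_sphere hw hρ0.ne') hv0 m,
    Polynomial.Chebyshev.T_eval_Zh_s13 hv0, zpow_natCast, zpow_natCast, residues]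
  ring
end
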